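/- Let σ₁,...,σ_K be density matrices that are affinely dependent, p a strictly positive probability distribution, and {Fₖ} a POVM with Tr(Fₖ σₖ) > 1/2 for all k. Then the guessing probability Σₖ pₖ Tr(Fₖ σₖ) is strictly less than 1 − p_min/2, where p_min = minₖ pₖ. -/

import Mathlib

open Matrix
open scoped ComplexOrder

/-!
Affine dependence lets us move the ensemble weights `p` along a relation `∑ cₖ σₖ = 0`,
`∑ cₖ = 0` (Carathéodory) until some weight `q j` vanishes, without changing the averaged
state `ρ = ∑ pₖ σₖ` and, choosing the sign of `c`, without decreasing the success probability.
Since `ρ` is both `∑ pₖ σₖ` and `∑ qₖ σₖ`, the outcome probabilities `Tr(Fₖ ρ)`, which add up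
to `1`, dominate `qₖ Tr(Fₖ σₖ)` for `k ≠ j` and `p j Tr(F j σ j) > p j / 2` for `k = j`;
hence `∑ pₖ Tr(Fₖ σₖ) ≤ ∑ qₖ Tr(Fₖ σₖ) < 1 - p j / 2`.
-/

open Finset

section Caratheodory

variable {ι V : Type*} [Fintype ι] [AddCommGroup V] [Module ℝ V]

theorem exists_affine_relation_pos_of_not_affineIndependent {σ : ι → V}
    (h : ¬ AffineIndependent ℝ σ) (g : ι → ℝ) :
    ∃ c : ι → ℝ, ∑ i, c i = 0 ∧ ∑ i, c i • σ i = 0 ∧ ∑ i, c i * g i ≤ 0 ∧ ∃ j, 0 < c j := by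
  obtain ⟨w, hw, hwσ, i, hi⟩ :
      ∃ w : ι → ℝ, ∑ i, w i = 0 ∧ univ.weightedVSub σ w = 0 ∧ ∃ i, w i ≠ 0 := by
    simpa [affineIndependent_iff_of_fintype] using h
  rw [weightedVSub_eq_linear_combination _ hw] at hwσ
  obtain ⟨c, hc, hcσ, hcg, i, hi⟩ : ∃ c : ι → ℝ,
      ∑ i, c i = 0 ∧ ∑ i, c i • σ i = 0 ∧ ∑ i, c i * g i ≤ 0 ∧ ∃ i, c i ≠ 0 := by
    rcases le_total (∑ i, w i * g i) 0 with hwg | hwg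
    · exact ⟨w, hw, hwσ, hwg, i, hi⟩
    · refine ⟨-w, ?_, ?_, ?_, i, neg_ne_zero.mpr hi⟩ <;>
        simp [neg_smul, hw, hwσ, hwg]
  obtain ⟨j, -, hj⟩ := exists_pos_of_sum_zero_of_exists_nonzero c hc ⟨i, mem_univ i, hi⟩
  exact ⟨c, hc, hcσ, hcg, j, hj⟩

theorem exists_nonneg_sub_smul_eq_zero {p c : ι → ℝ} (hp : 0 ≤ p) (hc : ∃ j, 0 < c j) :
    ∃ ε : ℝ, 0 ≤ ε ∧ 0 ≤ p - ε • c ∧ ∃ j, (p - ε • c) j = 0 := by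
  classical
  obtain ⟨j, hj, hmin⟩ := (univ.filter fun i => 0 < c i).exists_min_image (fun i => p i / c i)
    (by simpa [Finset.Nonempty] using hc)
  rw [mem_filter] at hj
  refine ⟨p j / c j, div_nonneg (hp j) hj.2.le, fun i => ?_, j, ?_⟩
  · rcases lt_or_ge 0 (c i) with hci | hci
    · simpa [sub_nonneg, ← le_div_iff₀ hci] using hmin i (mem_filter.mpr ⟨mem_univ i, hci⟩)
    · simpa using (mul_nonpos_of_nonneg_of_nonpos (div_nonneg (hp j) hj.2.le) hci).trans (hp i)
  · simp [div_mul_cancel₀ _ hj.2.ne']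

theorem exists_weights_eq_zero_of_not_affineIndependent {σ : ι → V}
    (h : ¬ AffineIndependent ℝ σ) {p : ι → ℝ} (hp : 0 ≤ p) (g : ι → ℝ) :
    ∃ q : ι → ℝ, 0 ≤ q ∧ ∑ i, q i • σ i = ∑ i, p i • σ i ∧
      ∑ i, p i * g i ≤ ∑ i, q i * g i ∧ ∃ j, q j = 0 := by
  obtain ⟨c, -, hcσ, hcg, hc⟩ := exists_affine_relation_pos_of_not_affineIndependent h g
  obtain ⟨ε, hε, hq, hqj⟩ := exists_nonneg_sub_smul_eq_zero hp hc
  refine ⟨p - ε • c, hq, ?_, ?_, hqj⟩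
  · simp [sub_smul, sum_sub_distrib, mul_smul, ← smul_sum, hcσ]
  · simp only [Pi.sub_apply, Pi.smul_apply, smul_eq_mul, sub_mul, sum_sub_distrib, mul_assoc,
      ← mul_sum]
    nlinarith

end Caratheodory

namespace Matrix

variable {m ι 𝕜 : Type*} [Fintype m] [Fintype ι] [RCLike 𝕜]

open scoped MatrixOrder in
theorem PosSemidef.trace_mul_nonneg {A B : Matrix m m 𝕜} (hA : A.PosSemidef)
    (hB : B.PosSemidef) : 0 ≤ (A * B).trace := by
  classical
  obtain ⟨D, rfl⟩ := CStarAlgebra.nonneg_iff_eq_star_mul_self.mp hB.nonneg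
  rw [← Matrix.mul_assoc, trace_mul_comm, ← Matrix.mul_assoc, star_eq_conjTranspose]
  exact (hA.mul_mul_conjTranspose_same D).trace_nonneg

theorem re_trace_mul_sum_smul (F : Matrix m m 𝕜) (σ : ι → Matrix m m 𝕜) (w : ι → ℝ) :
    RCLike.re (F * ∑ i, w i • σ i).trace = ∑ i, w i * RCLike.re (F * σ i).trace := by
  simp [mul_sum, trace_sum, trace_smul, RCLike.smul_re]

theorem mul_re_trace_le_re_trace_mul_sum_smul {F : Matrix m m 𝕜} {σ : ι → Matrix m m 𝕜}
    (hF : F.PosSemidef) (hσ : ∀ i, (σ i).PosSemidef) {w : ι → ℝ} (hw : 0 ≤ w) (k : ι) :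
    w k * RCLike.re (F * σ k).trace ≤ RCLike.re (F * ∑ i, w i • σ i).trace := by
  rw [re_trace_mul_sum_smul]
  exact single_le_sum (fun i _ => mul_nonneg (hw i)
    (RCLike.nonneg_iff.mp (hF.trace_mul_nonneg (hσ i))).1) (mem_univ k)

theorem sum_mul_re_trace_add_mul_re_trace_le [DecidableEq m] {F σ : ι → Matrix m m 𝕜}
    (hF : ∀ k, (F k).PosSemidef) (hFsum : ∑ k, F k = 1) (hσ : ∀ k, (σ k).PosSemidef)
    {p q : ι → ℝ} (hp : 0 ≤ p) (hq : 0 ≤ q) (hpq : ∑ k, q k • σ k = ∑ k, p k • σ k)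
    {j : ι} (hqj : q j = 0) :
    ∑ k, q k * RCLike.re (F k * σ k).trace + p j * RCLike.re (F j * σ j).trace ≤
      RCLike.re (∑ k, p k • σ k).trace := by
  classical
  set ρ := ∑ k, p k • σ k
  have hρ : RCLike.re ρ.trace = ∑ k, RCLike.re (F k * ρ).trace := by
    rw [← map_sum, ← trace_sum, ← sum_mul, hFsum, Matrix.one_mul]
  have hk : ∀ k, q k * RCLike.re (F k * σ k).trace ≤ RCLike.re (F k * ρ).trace := fun k => by
    rw [← hpq]; exact mul_re_trace_le_re_trace_mul_sum_smul (hF k) hσ hq k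
  rw [hρ, ← add_sum_erase _ _ (mem_univ j), ← add_sum_erase _ _ (mem_univ j), hqj, zero_mul,
    zero_add, add_comm]
  exact add_le_add (mul_re_trace_le_re_trace_mul_sum_smul (hF j) hσ hp j)
    (sum_le_sum fun k _ => hk k)

end Matrix

/-- If the density matrices `σ k` are affinely dependent and
`Tr(F k σ k) > 1/2` for all `k`, then the guessing probability is strictly
below `1 − (min p)/2`. -/
theorem guess_lt_of_affine_dependent {n K : ℕ} (hK : 0 < K)
    (σ F : Fin K → Matrix (Fin n) (Fin n) ℂ)
    (hσ : ∀ k, (σ k).PosSemidef) (hσt : ∀ k, (σ k).trace = 1)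
    (hdep : ¬ AffineIndependent ℝ σ)
    (hF : ∀ k, (F k).PosSemidef) (hFsum : ∑ k, F k = 1)
    (hbig : ∀ k, (1 : ℝ) / 2 < ((F k * σ k).trace).re)
    (p : Fin K → ℝ) (hp : ∀ k, 0 < p k) (hps : ∑ k, p k = 1) :
    ∑ k, p k * ((F k * σ k).trace).re <
      1 - (Finset.univ.inf' (Finset.univ_nonempty_iff.mpr ⟨⟨0, hK⟩⟩) p) / 2 := by
  have hp₀ : 0 ≤ p := fun k => (hp k).le
  obtain ⟨q, hq, hpq, hguess, j, hqj⟩ :=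
    exists_weights_eq_zero_of_not_affineIndependent hdep hp₀ fun k => ((F k * σ k).trace).re
  have hbound := sum_mul_re_trace_add_mul_re_trace_le hF hFsum hσ hp₀ hq hpq hqj
  have htrace : ((∑ k, p k • σ k).trace).re = 1 := by
    simp [trace_sum, trace_smul, hσt, ← Complex.ofReal_sum, hps]
  have hj : p j / 2 < p j * ((F j * σ j).trace).re := by nlinarith [hbig j, hp j]
  have hmin := inf'_le p (mem_univ j)
  simp only [RCLike.re_to_complex, htrace] at hbound
  linarith
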